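/- A finite directed graph is an IO-graph if and only if it is a disjoint union of directed paths (lines) and/or directed cycles (circles). -/

import Mathlib

/-- Isomorphism of digraphs on arbitrary vertex types. -/
def IsoT {α β : Type} (E : α → α → Prop) (F : β → β → Prop) : Prop :=
  ∃ φ : α ≃ β, ∀ u v, E u v ↔ F (φ u) (φ v)

/-- `G` is (isomorphic to) an induced substructure of `G'`. -/
def IsInducedSub {n m : ℕ} (E : Fin n → Fin n → Prop) (F : Fin m → Fin m → Prop) : Prop :=
  ∃ φ : Fin n ↪ Fin m, ∀ u v, E u v ↔ F (φ u) (φ v)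

def E1 : Fin 1 → Fin 1 → Prop := fun _ _ => False
def E2 : Fin 2 → Fin 2 → Prop := fun _ _ => False
def E3 : Fin 3 → Fin 3 → Prop := fun _ _ => False
def I2 : Fin 2 → Fin 2 → Prop := fun u v => u = 0 ∧ v = 1
/-- `I₂ ⊔ E₁`: an edge plus an isolated vertex, on three vertices. -/
def I2E1 : Fin 3 → Fin 3 → Prop := fun u v => u = 0 ∧ v = 1
def I3 : Fin 3 → Fin 3 → Prop := fun u v => v.val = u.val + 1
def O3 : Fin 3 → Fin 3 → Prop := fun u v => (u.val + 1) % 3 = v.val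

/-- A digraph is an IO-graph if its induced substructures on 1, 2 and 3
vertices are among the prescribed lists. -/
def IsIO {n : ℕ} (E : Fin n → Fin n → Prop) : Prop :=
  (∀ φ : Fin 1 ↪ Fin n, IsoT (fun u v => E (φ u) (φ v)) E1) ∧
  (∀ φ : Fin 2 ↪ Fin n, IsoT (fun u v => E (φ u) (φ v)) E2 ∨
    IsoT (fun u v => E (φ u) (φ v)) I2) ∧
  (∀ φ : Fin 3 ↪ Fin n, IsoT (fun u v => E (φ u) (φ v)) E3 ∨
    IsoT (fun u v => E (φ u) (φ v)) I2E1 ∨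
    IsoT (fun u v => E (φ u) (φ v)) I3 ∨
    IsoT (fun u v => E (φ u) (φ v)) O3)

/-- The disjoint union of lines/circles indexed by `Fin k`, with component `i`
a circle of size `c i` when `bc i = true` and a line of size `c i` otherwise. -/
def DURel (k : ℕ) (c : Fin k → ℕ) (bc : Fin k → Bool) :
    ((i : Fin k) × Fin (c i)) → ((i : Fin k) × Fin (c i)) → Prop :=
  fun a b => a.1 = b.1 ∧
    (if bc a.1 then (a.2.val + 1) % c a.1 = b.2.val
     else b.2.val = a.2.val + 1)

/-!
Both sides are equivalent to `E` being an oriented graph (no loops, no 2-cycles) in which every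
vertex has in- and out-degree at most one. On the IO side this is read off from the induced
subgraphs on one, two and three vertices, and conversely the only such relations on at most
three vertices are the listed ones (checked by enumeration). On the other side, a finite graph of
this kind splits off one component at a time: walking forward from a source gives a line that
ends in a sink; if there is no source, every vertex has a predecessor, so by finiteness the
successor map is a permutation, and the orbit of any vertex is a circle, of length at least three
because there are no loops or 2-cycles.
-/

open Function Set

structure OrientedDegLeOne {α : Type} (E : α → α → Prop) : Prop where
  irrefl : ∀ v, ¬ E v v
  asymm : ∀ u v, E u v → ¬ E v u
  out_unique : ∀ u v w, E u v → E u w → v = w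
  in_unique : ∀ u v w, E u w → E v w → u = v

namespace IsoT

variable {α β γ δ : Type} {E : α → α → Prop} {F : β → β → Prop}

theorem symm (h : IsoT E F) : IsoT F E := by
  obtain ⟨φ, hφ⟩ := h
  exact ⟨φ.symm, fun u v => by simpa using (hφ (φ.symm u) (φ.symm v)).symm⟩

theorem trans {G : γ → γ → Prop} (h₁ : IsoT E F) (h₂ : IsoT F G) : IsoT E G := by
  obtain ⟨φ, hφ⟩ := h₁
  obtain ⟨ψ, hψ⟩ := h₂
  exact ⟨φ.trans ψ, fun u v => (hφ u v).trans (hψ _ _)⟩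

theorem sumLiftRel {E' : γ → γ → Prop} {F' : δ → δ → Prop} (h : IsoT E F) (h' : IsoT E' F') :
    IsoT (Sum.LiftRel E E') (Sum.LiftRel F F') := by
  obtain ⟨φ, hφ⟩ := h
  obtain ⟨ψ, hψ⟩ := h'
  refine ⟨Equiv.sumCongr φ ψ, ?_⟩
  rintro (u | u) (v | v) <;> simp [hφ, hψ]

end IsoT

theorem isoT_sumLiftRel_compl {α : Type} {E : α → α → Prop} (S : Set α)
    (hS : ∀ u v, E u v → (u ∈ S ↔ v ∈ S)) :
    IsoT E (Sum.LiftRel (fun u v : S => E u v) (fun u v : ↥Sᶜ => E u v)) := by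
  classical
  refine IsoT.symm ⟨Equiv.Set.sumCompl S, ?_⟩
  rintro (⟨u, hu⟩ | ⟨u, hu⟩) (⟨v, hv⟩ | ⟨v, hv⟩)
  · simp
  · simpa using fun huv => hv ((hS u v huv).1 hu)
  · simpa using fun huv => hu ((hS u v huv).2 hv)
  · simp

namespace OrientedDegLeOne

variable {α β : Type} {E : α → α → Prop} {F : β → β → Prop}

theorem comap (hF : OrientedDegLeOne F) {φ : α → β} (hφ : Injective φ) :
    OrientedDegLeOne (fun u v => F (φ u) (φ v)) where
  irrefl v := hF.irrefl (φ v)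
  asymm u v := hF.asymm (φ u) (φ v)
  out_unique _ _ _ h h' := hφ (hF.out_unique _ _ _ h h')
  in_unique _ _ _ h h' := hφ (hF.in_unique _ _ _ h h')

theorem of_isoT (hF : OrientedDegLeOne F) (h : IsoT E F) : OrientedDegLeOne E := by
  obtain ⟨φ, hφ⟩ := h
  obtain rfl : E = fun u v => F (φ u) (φ v) := funext₂ fun u v => propext (hφ u v)
  exact hF.comap φ.injective

instance [Fintype α] [DecidableEq α] [DecidableRel E] : Decidable (OrientedDegLeOne E) :=
  decidable_of_iff ((∀ v, ¬ E v v) ∧ (∀ u v, E u v → ¬ E v u) ∧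
      (∀ u v w, E u v → E u w → v = w) ∧ (∀ u v w, E u w → E v w → u = v))
    ⟨fun ⟨h₁, h₂, h₃, h₄⟩ => ⟨h₁, h₂, h₃, h₄⟩, fun ⟨h₁, h₂, h₃, h₄⟩ => ⟨h₁, h₂, h₃, h₄⟩⟩

end OrientedDegLeOne

instance {α β : Type} [Fintype α] [DecidableEq α] [Fintype β] [DecidableEq β]
    (E : α → α → Prop) (F : β → β → Prop) [DecidableRel E] [DecidableRel F] :
    Decidable (IsoT E F) :=
  inferInstanceAs (Decidable (∃ φ : α ≃ β, ∀ u v, E u v ↔ F (φ u) (φ v)))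

theorem exists_bool_rel {α : Type} (R : α → α → Prop) :
    ∃ f : α → α → Bool, R = fun u v => f u v = true :=
  ⟨fun u v => @decide (R u v) (Classical.dec _), by simp⟩

theorem isoT_E1_iff (R : Fin 1 → Fin 1 → Prop) : IsoT R E1 ↔ OrientedDegLeOne R := by
  obtain ⟨f, rfl⟩ := exists_bool_rel R
  unfold E1
  revert f
  decide

theorem isoT_E2_or_isoT_I2_iff (R : Fin 2 → Fin 2 → Prop) :
    IsoT R E2 ∨ IsoT R I2 ↔ OrientedDegLeOne R := by
  obtain ⟨f, rfl⟩ := exists_bool_rel R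
  unfold E2 I2
  revert f
  decide

theorem isoT_E3_or_isoT_I2E1_or_isoT_I3_or_isoT_O3_iff (R : Fin 3 → Fin 3 → Prop) :
    IsoT R E3 ∨ IsoT R I2E1 ∨ IsoT R I3 ∨ IsoT R O3 ↔ OrientedDegLeOne R := by
  -- Deciding the whole equivalence would run the isomorphism search on all 512 relations;
  -- split this way, it only runs on the oriented ones.
  constructor
  · have models : OrientedDegLeOne E3 ∧ OrientedDegLeOne I2E1 ∧ OrientedDegLeOne I3 ∧
        OrientedDegLeOne O3 := by
      unfold E3 I2E1 I3 O3
      decide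
    rintro (h | h | h | h)
    exacts [models.1.of_isoT h, models.2.1.of_isoT h, models.2.2.1.of_isoT h,
      models.2.2.2.of_isoT h]
  · obtain ⟨f, rfl⟩ := exists_bool_rel R
    unfold E3 I2E1 I3 O3
    revert f
    decide +kernel

theorem orientedDegLeOne_of_forall_embedding {α : Type} {E : α → α → Prop}
    (h₁ : ∀ φ : Fin 1 ↪ α, OrientedDegLeOne fun u v => E (φ u) (φ v))
    (h₂ : ∀ φ : Fin 2 ↪ α, OrientedDegLeOne fun u v => E (φ u) (φ v))
    (h₃ : ∀ φ : Fin 3 ↪ α, OrientedDegLeOne fun u v => E (φ u) (φ v)) :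
    OrientedDegLeOne E := by
  have irrefl v : ¬ E v v := (h₁ ⟨fun _ => v, fun _ _ _ => Subsingleton.elim _ _⟩).irrefl 0
  have ne_of_edge {u v} (huv : E u v) : u ≠ v := by rintro rfl; exact irrefl u huv
  refine ⟨irrefl, fun u v huv hvu => ?_, fun u v w huv huw => ?_, fun u v w huw hvw => ?_⟩
  · exact (h₂ ⟨![u, v], by simpa using ne_of_edge huv⟩).asymm 0 1 huv hvu
  · by_contra hvw
    have hinj : Injective ![u, v, w] :=
      Fin.cons_injective_iff.2 ⟨by simp [ne_of_edge huv, ne_of_edge huw], by simpa using hvw⟩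
    exact absurd ((h₃ ⟨_, hinj⟩).out_unique 0 1 2 huv huw) (by decide)
  · by_contra huv
    have hinj : Injective ![u, v, w] :=
      Fin.cons_injective_iff.2 ⟨by simp [huv, ne_of_edge huw], by simpa using ne_of_edge hvw⟩
    exact absurd ((h₃ ⟨_, hinj⟩).in_unique 0 1 2 huw hvw) (by decide)

theorem isIO_iff_orientedDegLeOne {n : ℕ} (E : Fin n → Fin n → Prop) :
    IsIO E ↔ OrientedDegLeOne E := by
  simp only [IsIO, isoT_E1_iff, isoT_E2_or_isoT_I2_iff,
    isoT_E3_or_isoT_I2E1_or_isoT_I3_or_isoT_O3_iff]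
  exact ⟨fun ⟨h₁, h₂, h₃⟩ => orientedDegLeOne_of_forall_embedding h₁ h₂ h₃,
    fun hE => ⟨fun φ => hE.comap φ.injective, fun φ => hE.comap φ.injective,
      fun φ => hE.comap φ.injective⟩⟩

-- `DURel k c bc ⟨i, x⟩ ⟨i, y⟩` unfolds to `lineOrCircle (c i) (bc i) x y`.
def lineOrCircle (m : ℕ) (b : Bool) (x y : Fin m) : Prop :=
  if b then (x.val + 1) % m = y.val else y.val = x.val + 1

theorem lineOrCircle_iff {m : ℕ} {b : Bool} {x y : Fin m} :
    lineOrCircle m b x y ↔ y.val = x.val + 1 ∨ (b = true ∧ x.val + 1 = m ∧ y.val = 0) := by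
  have hx := x.isLt
  cases b
  · simp [lineOrCircle]
  · rcases (by omega : x.val + 1 = m ∨ x.val + 1 < m) with h | h
    · simp [lineOrCircle, h]
      omega
    · simp [lineOrCircle, Nat.mod_eq_of_lt h]
      omega

theorem orientedDegLeOne_lineOrCircle {m : ℕ} {b : Bool} (hb : b = true → 3 ≤ m) :
    OrientedDegLeOne (lineOrCircle m b) := by
  constructor <;> intros <;> simp only [lineOrCircle_iff, Fin.ext_iff] at * <;> cases b <;>
    simp at * <;> omega

theorem orientedDegLeOne_DURel {k : ℕ} {c : Fin k → ℕ} {bc : Fin k → Bool}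
    (hbc : ∀ i, bc i = true → 3 ≤ c i) : OrientedDegLeOne (DURel k c bc) where
  irrefl := fun ⟨i, x⟩ ⟨_, h⟩ => (orientedDegLeOne_lineOrCircle (hbc i)).irrefl x h
  asymm := by
    rintro ⟨i, x⟩ ⟨j, y⟩ ⟨⟨⟩, h⟩ ⟨-, h'⟩
    exact (orientedDegLeOne_lineOrCircle (hbc i)).asymm x y h h'
  out_unique := by
    rintro ⟨i, x⟩ ⟨j, y⟩ ⟨l, z⟩ ⟨⟨⟩, h⟩ ⟨⟨⟩, h'⟩
    rw [(orientedDegLeOne_lineOrCircle (hbc i)).out_unique x y z h h']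
  in_unique := by
    rintro ⟨i, x⟩ ⟨j, y⟩ ⟨l, z⟩ ⟨⟨⟩, h⟩ ⟨⟨⟩, h'⟩
    rw [(orientedDegLeOne_lineOrCircle (hbc i)).in_unique x y z h h']

def sumSigmaFinConsEquiv {k : ℕ} (m : ℕ) (c : Fin k → ℕ) :
    Fin m ⊕ ((i : Fin k) × Fin (c i)) ≃
      ((i : Fin (k + 1)) × Fin ((Fin.cons m c : Fin (k + 1) → ℕ) i)) where
  toFun := Sum.elim (fun x => ⟨0, x⟩) (fun s => ⟨s.1.succ, s.2⟩)
  invFun s :=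
    Fin.cases (motive := fun i => Fin ((Fin.cons m c : Fin (k + 1) → ℕ) i) →
        Fin m ⊕ ((i : Fin k) × Fin (c i)))
      Sum.inl (fun i x => Sum.inr ⟨i, x⟩) s.1 s.2
  left_inv := by rintro (x | ⟨i, x⟩) <;> rfl
  right_inv := by
    rintro ⟨i, x⟩
    induction i using Fin.cases <;> rfl

theorem isoT_sumLiftRel_lineOrCircle_DURel {k m : ℕ} (b : Bool) (c : Fin k → ℕ)
    (bc : Fin k → Bool) :
    IsoT (Sum.LiftRel (lineOrCircle m b) (DURel k c bc))
      (DURel (k + 1) (Fin.cons m c) (Fin.cons b bc)) := by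
  refine ⟨sumSigmaFinConsEquiv m c, ?_⟩
  rintro (x | ⟨i, x⟩) (y | ⟨j, y⟩)
  · simp [sumSigmaFinConsEquiv, DURel, lineOrCircle]
  · simp [sumSigmaFinConsEquiv, DURel, (Fin.succ_ne_zero j).symm]
  · simp [sumSigmaFinConsEquiv, DURel, Fin.succ_ne_zero i]
  · simp [sumSigmaFinConsEquiv, DURel]

structure IsLineOrCircleComponent {α : Type} (E : α → α → Prop) {m : ℕ} (b : Bool)
    (f : Fin m → α) : Prop where
  injective : Injective f
  edge_iff : ∀ x y, lineOrCircle m b x y ↔ E (f x) (f y)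
  mem_range_iff_of_edge : ∀ u v, E u v → (u ∈ range f ↔ v ∈ range f)

namespace IsLineOrCircleComponent

variable {α : Type} {E : α → α → Prop}

theorem isoT {m : ℕ} {b : Bool} {f : Fin m → α} (h : IsLineOrCircleComponent E b f) :
    IsoT (fun u v : range f => E u v) (lineOrCircle m b) :=
  IsoT.symm ⟨Equiv.ofInjective f h.injective, by simpa using h.edge_iff⟩

theorem of_seq (hE : OrientedDegLeOne E) {a : ℕ → α} {m : ℕ} {b : Bool} (hm : 0 < m)
    (ha : InjOn a (Iio m)) (hstep : ∀ x, x + 1 < m → E (a x) (a (x + 1)))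
    (hlast : ∀ v, E (a (m - 1)) v ↔ b = true ∧ v = a 0)
    (hfirst : ∀ u, E u (a 0) ↔ b = true ∧ u = a (m - 1)) :
    IsLineOrCircleComponent E b (fun x : Fin m => a x) := by
  have hout x (hx : x < m) v : E (a x) v ↔
      (x + 1 < m ∧ v = a (x + 1)) ∨ (x + 1 = m ∧ b = true ∧ v = a 0) := by
    rcases (by omega : x + 1 < m ∨ x + 1 = m) with h | h
    · have := hstep x h
      simp only [h, true_and, h.ne, false_and, or_false]
      exact ⟨fun hv => hE.out_unique _ _ _ hv this, fun hv => hv ▸ this⟩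
    · simp only [h, lt_irrefl, false_and, true_and, false_or, ← hlast]
      rw [show x = m - 1 by omega]
  have hin y (hy : y < m) u : E u (a y) ↔
      (0 < y ∧ u = a (y - 1)) ∨ (y = 0 ∧ b = true ∧ u = a (m - 1)) := by
    rcases Nat.eq_zero_or_pos y with rfl | h
    · simp [hfirst]
    · have := hstep (y - 1) (by omega)
      rw [Nat.sub_add_cancel h] at this
      simp only [h, true_and, h.ne', false_and, or_false]
      exact ⟨fun hu => hE.in_unique _ _ _ hu this, fun hu => hu ▸ this⟩
  refine ⟨fun x y hxy => Fin.ext (ha x.isLt y.isLt hxy), fun x y => ?_, fun u v huv => ?_⟩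
  · have hy := y.isLt
    rw [_root_.lineOrCircle_iff, hout x x.isLt, ha.eq_iff hy hm]
    rcases (by omega : x.val + 1 < m ∨ x.val + 1 = m) with h | h
    · simp [ha.eq_iff hy h, h, h.ne]
    · simp [h, hy.ne]
  · constructor
    · rintro ⟨x, rfl⟩
      rcases (hout x x.isLt v).1 huv with ⟨h, rfl⟩ | ⟨-, -, rfl⟩
      exacts [⟨⟨x + 1, h⟩, rfl⟩, ⟨⟨0, hm⟩, rfl⟩]
    · rintro ⟨y, rfl⟩
      rcases (hin y y.isLt u).1 huv with ⟨h, rfl⟩ | ⟨-, -, rfl⟩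
      exacts [⟨⟨y - 1, by omega⟩, rfl⟩, ⟨⟨m - 1, by omega⟩, rfl⟩]

end IsLineOrCircleComponent

namespace OrientedDegLeOne

variable {α : Type} {E : α → α → Prop}

theorem injOn_of_chain_from_source (hE : OrientedDegLeOne E) {a : ℕ → α} {m : ℕ}
    (hsource : ∀ u, ¬ E u (a 0)) (hstep : ∀ x, x + 1 < m → E (a x) (a (x + 1))) :
    InjOn a (Iio m) := by
  intro i hi j hj hij
  induction i generalizing j with
  | zero =>
    cases j with
    | zero => rfl
    | succ j => exact absurd (hij ▸ hstep j hj) (hsource _)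
  | succ i ih =>
    cases j with
    | zero => exact absurd (hij ▸ hstep i hi) (hsource _)
    | succ j =>
      rw [ih (by simp at hi ⊢; omega) (by simp at hj ⊢; omega)
        (hE.in_unique _ _ _ (hstep i hi) (hij ▸ hstep j hj))]

theorem exists_line_component [Finite α] (hE : OrientedDegLeOne E) {v : α}
    (hv : ∀ u, ¬ E u v) :
    ∃ (m : ℕ) (f : Fin m → α), 0 < m ∧ IsLineOrCircleComponent E false f := by
  have : ∀ u, ∃ w, ∀ w', E u w' → w' = w := fun u => by
    by_cases h : ∃ w, E u w
    · obtain ⟨w, hw⟩ := h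
      exact ⟨w, fun w' hw' => hE.out_unique _ _ _ hw' hw⟩
    · exact ⟨u, fun w' hw' => (h ⟨w', hw'⟩).elim⟩
  choose s hs using this
  set a : ℕ → α := fun j => s^[j] v
  have step_of_not_sink {x} (hx : ∃ w, E (a x) w) : E (a x) (a (x + 1)) := by
    obtain ⟨w, hw⟩ := hx
    simpa [a, iterate_succ_apply', ← hs _ _ hw] using hw
  have hsink : ∃ M, ∀ w, ¬ E (a M) w := by
    by_contra! h
    have hinj : Injective a := fun i j hij =>
      hE.injOn_of_chain_from_source (a := a) (m := max i j + 1) hv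
        (fun x _ => step_of_not_sink (h x)) (by simp) (by simp) hij
    exact not_injective_infinite_finite a hinj
  classical
  let M := Nat.find hsink
  have hstep x (hx : x + 1 < M + 1) : E (a x) (a (x + 1)) := by
    refine step_of_not_sink ?_
    by_contra! h
    exact Nat.find_min hsink (by omega) h
  refine ⟨M + 1, _, M.succ_pos, IsLineOrCircleComponent.of_seq hE M.succ_pos
    (hE.injOn_of_chain_from_source (a := a) hv hstep) hstep
    (fun w => iff_of_false (by simpa using Nat.find_spec hsink w) (by simp))
    (fun u => iff_of_false (hv u) (by simp))⟩

theorem exists_circle_component [Finite α] [Nonempty α] (hE : OrientedDegLeOne E)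
    (hpred : ∀ v, ∃ u, E u v) :
    ∃ (m : ℕ) (f : Fin m → α), 3 ≤ m ∧ IsLineOrCircleComponent E true f := by
  choose p hp using hpred
  have hp_inj : Injective p := fun v w hvw => hE.out_unique _ _ _ (hp v) (hvw ▸ hp w)
  have hsucc u : ∃ w, E u w := by
    obtain ⟨w, rfl⟩ := Finite.surjective_of_injective hp_inj u
    exact ⟨w, hp w⟩
  choose s hs using hsucc
  have hs_inj : Injective s := fun u u' h => hE.in_unique _ _ _ (hs u) (h ▸ hs u')
  set v := Classical.arbitrary α
  set m := minimalPeriod s v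
  have hm : 0 < m := minimalPeriod_pos_of_mem_periodicPts (hs_inj.mem_periodicPts v)
  have hstep x : E (s^[x] v) (s^[x + 1] v) := by
    simpa [iterate_succ_apply'] using hs (s^[x] v)
  have hlast_edge : E (s^[m - 1] v) v := by
    have := hstep (m - 1)
    rwa [Nat.sub_add_cancel hm, iterate_minimalPeriod] at this
  have hlast w : E (s^[m - 1] v) w ↔ w = v :=
    ⟨fun h => hE.out_unique _ _ _ h hlast_edge, fun h => h ▸ hlast_edge⟩
  have hm3 : 3 ≤ m := by
    by_contra! hlt
    have hper : s^[m] v = v := iterate_minimalPeriod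
    rcases (by omega : m = 1 ∨ m = 2) with h | h <;> rw [h] at hper <;> simp at hper
    · exact hE.irrefl v (by simpa [hper] using hstep 0)
    · exact hE.asymm _ _ (hstep 0) (by simpa [hper] using hstep 1)
  refine ⟨m, _, hm3, IsLineOrCircleComponent.of_seq hE hm iterate_injOn_Iio_minimalPeriod
    (fun x _ => hstep x) (by simpa using hlast) fun u => ?_⟩
  simp only [true_and, iterate_zero, id_eq]
  exact ⟨fun h => hE.in_unique _ _ _ h hlast_edge, fun h => h ▸ hlast_edge⟩

theorem exists_component [Finite α] [Nonempty α] (hE : OrientedDegLeOne E) :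
    ∃ (m : ℕ) (b : Bool) (f : Fin m → α),
      0 < m ∧ (b = true → 3 ≤ m) ∧ IsLineOrCircleComponent E b f := by
  by_cases hsource : ∃ v, ∀ u, ¬ E u v
  · obtain ⟨v, hv⟩ := hsource
    obtain ⟨m, f, hm, hf⟩ := hE.exists_line_component hv
    exact ⟨m, false, f, hm, by simp, hf⟩
  · push Not at hsource
    obtain ⟨m, f, hm, hf⟩ := hE.exists_circle_component hsource
    exact ⟨m, true, f, by omega, fun _ => hm, hf⟩

theorem exists_isoT_DURel [Finite α] (hE : OrientedDegLeOne E) :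
    ∃ (k : ℕ) (c : Fin k → ℕ) (bc : Fin k → Bool),
      (∀ i, 0 < c i) ∧ (∀ i, bc i = true → 3 ≤ c i) ∧ IsoT E (DURel k c bc) := by
  induction h : Nat.card α using Nat.strong_induction_on generalizing α with
  | _ N ih =>
  cases isEmpty_or_nonempty α
  · exact ⟨0, Fin.elim0, Fin.elim0, (·.elim0), (·.elim0),
      Equiv.equivOfIsEmpty _ _, fun u => isEmptyElim u⟩
  obtain ⟨m, b, f, hm, hb, hf⟩ := hE.exists_component
  have hcard : Nat.card ↥(range f)ᶜ < N :=
    h ▸ Finite.card_subtype_lt (x := f ⟨0, hm⟩) (by simp)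
  obtain ⟨k, c, bc, hc, hbc, hiso⟩ :=
    ih _ hcard (hE.comap Subtype.val_injective) rfl
  refine ⟨k + 1, Fin.cons m c, Fin.cons b bc, Fin.cases hm hc, Fin.cases hb hbc, ?_⟩
  exact (isoT_sumLiftRel_compl _ hf.mem_range_iff_of_edge).trans
    ((hf.isoT.sumLiftRel hiso).trans (isoT_sumLiftRel_lineOrCircle_DURel b c bc))

end OrientedDegLeOne

theorem isIO_iff_disjUnion_lines_circles_general {n : ℕ} (E : Fin n → Fin n → Prop) :
    IsIO E ↔ ∃ (k : ℕ) (c : Fin k → ℕ) (bc : Fin k → Bool),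
      (∀ i, 0 < c i) ∧ (∀ i, bc i = true → 3 ≤ c i) ∧
      IsoT E (DURel k c bc) := by
  rw [isIO_iff_orientedDegLeOne]
  refine ⟨OrientedDegLeOne.exists_isoT_DURel, ?_⟩
  rintro ⟨k, c, bc, -, hbc, hiso⟩
  exact (orientedDegLeOne_DURel hbc).of_isoT hiso

/-- A finite digraph is an IO-graph iff it is a disjoint union of
lines (directed paths) and/or circles (directed cycles). -/
theorem isIO_iff_disjUnion_lines_circles {n : ℕ} (hn : 0 < n) (E : Fin n → Fin n → Prop) :
    IsIO E ↔ ∃ (k : ℕ) (c : Fin k → ℕ) (bc : Fin k → Bool),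
      (∀ i, 0 < c i) ∧ (∀ i, bc i = true → 3 ≤ c i) ∧
      IsoT E (DURel k c bc) :=
  isIO_iff_disjUnion_lines_circles_general E
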